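/- The theta addition formula in the simplest case: θ_τ(z)·θ_τ(z+x) = θ_{2τ}(x)·θ_{2τ}(2z+x) + θ[1/2,0](2τ,x)·θ[1/2,0](2τ,2z+x) for all z, x ∈ ℂ. -/
import Mathlib


open Complex

/-- The Jacobi theta function `θ_τ(z) = ∑_{m ∈ ℤ} exp (π i (m² τ + 2 m z))`. -/
noncomputable def theta (τ z : ℂ) : ℂ :=
  ∑' m : ℤ, Complex.exp (↑Real.pi * Complex.I * ((m : ℂ) ^ 2 * τ + 2 * (m : ℂ) * z))

/-- The generalized theta function `θ[a,0](τ,z) = ∑_{m ∈ ℤ} exp (π i ((m+a)² τ + 2 (m+a) z))`. -/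
noncomputable def thetaChar (a : ℝ) (τ z : ℂ) : ℂ :=
  ∑' m : ℤ, Complex.exp (↑Real.pi * Complex.I *
    (((m : ℂ) + a) ^ 2 * τ + 2 * ((m : ℂ) + a) * z))

/-- The summand of `theta`. -/
noncomputable def Fterm (τ z : ℂ) (m : ℤ) : ℂ :=
  Complex.exp (↑Real.pi * Complex.I * ((m : ℂ) ^ 2 * τ + 2 * (m : ℂ) * z))

/-- The summand of `thetaChar (1/2)`. -/
noncomputable def Gterm (τ z : ℂ) (m : ℤ) : ℂ :=
  Complex.exp (↑Real.pi * Complex.I *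
    (((m : ℂ) + ((1 / 2 : ℝ) : ℂ)) ^ 2 * τ + 2 * ((m : ℂ) + ((1 / 2 : ℝ) : ℂ)) * z))

lemma theta_eq (τ z : ℂ) : theta τ z = ∑' m : ℤ, Fterm τ z m := rfl

lemma thetaChar_eq (τ z : ℂ) : thetaChar (1 / 2) (τ) z = ∑' m : ℤ, Gterm τ z m := rfl

lemma Fterm_eq (τ z : ℂ) (m : ℤ) : Fterm τ z m = jacobiTheta₂_term m z τ := by
  rw [Fterm, jacobiTheta₂_term]
  congr 1
  ring

lemma Gterm_eq (τ z : ℂ) (m : ℤ) :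
    Gterm τ z m = Complex.exp (↑Real.pi * Complex.I * (τ / 4 + z)) *
      jacobiTheta₂_term m (z + τ / 2) τ := by
  rw [Gterm, jacobiTheta₂_term, ← Complex.exp_add]
  congr 1
  push_cast
  ring

lemma summable_norm_jT (z : ℂ) {τ : ℂ} (hτ : 0 < τ.im) :
    Summable fun n : ℤ => ‖jacobiTheta₂_term n z τ‖ := by
  refine Summable.of_nonneg_of_le (fun _ => norm_nonneg _)
    (fun n => norm_jacobiTheta₂_term_le hτ (le_refl |z.im|) le_rfl n) ?_
  simpa using summable_pow_mul_jacobiTheta₂_term_bound |z.im| hτ 0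

lemma summable_norm_F (z : ℂ) {τ : ℂ} (hτ : 0 < τ.im) :
    Summable fun m : ℤ => ‖Fterm τ z m‖ := by
  simp only [Fterm_eq]
  exact summable_norm_jT z hτ

lemma summable_norm_G (z : ℂ) {τ : ℂ} (hτ : 0 < τ.im) :
    Summable fun m : ℤ => ‖Gterm τ z m‖ := by
  simp only [Gterm_eq, norm_mul]
  exact (summable_norm_jT (z + τ / 2) hτ).mul_left _

set_option maxHeartbeats 1000000 in
/-- The simplest case of the theta addition formula:
`θ_τ(z)·θ_τ(z+x) = θ_{2τ}(x)·θ_{2τ}(2z+x) + θ[1/2,0](2τ,x)·θ[1/2,0](2τ,2z+x)`. -/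
theorem stmt_9 (τ : ℂ) (hτ : 0 < τ.im) (z x : ℂ) :
    theta τ z * theta τ (z + x) =
      theta (2 * τ) x * theta (2 * τ) (2 * z + x) +
        thetaChar (1 / 2) (2 * τ) x * thetaChar (1 / 2) (2 * τ) (2 * z + x) := by
  have h2τ : 0 < (2 * τ).im := by
    rw [Complex.mul_im]
    simp
    linarith
  -- the combined summand
  set f : ℤ × ℤ → ℂ := fun p => Fterm τ z p.1 * Fterm τ (z + x) p.2 with hfdef
  -- norm-summability facts
  have na := summable_norm_F z hτ
  have nb := summable_norm_F (z + x) hτ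
  have nc := summable_norm_F x h2τ
  have nd := summable_norm_F (2 * z + x) h2τ
  have nE := summable_norm_G x h2τ
  have nF := summable_norm_G (2 * z + x) h2τ
  -- LHS as a double sum
  have hf : HasSum f (theta τ z * theta τ (z + x)) := by
    rw [theta_eq, theta_eq]
    exact na.of_norm.hasSum.mul nb.of_norm.hasSum (summable_mul_of_summable_norm na nb)
  have hCD : HasSum (fun p : ℤ × ℤ => Fterm (2 * τ) x p.1 * Fterm (2 * τ) (2 * z + x) p.2)
      (theta (2 * τ) x * theta (2 * τ) (2 * z + x)) := by
    rw [theta_eq, theta_eq]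
    exact nc.of_norm.hasSum.mul nd.of_norm.hasSum (summable_mul_of_summable_norm nc nd)
  have hEF : HasSum (fun p : ℤ × ℤ => Gterm (2 * τ) x p.1 * Gterm (2 * τ) (2 * z + x) p.2)
      (thetaChar (1 / 2) (2 * τ) x * thetaChar (1 / 2) (2 * τ) (2 * z + x)) := by
    rw [thetaChar_eq, thetaChar_eq]
    exact nE.of_norm.hasSum.mul nF.of_norm.hasSum (summable_mul_of_summable_norm nE nF)
  -- the two injections
  set i₁ : ℤ × ℤ → ℤ × ℤ := fun p => (p.2 - p.1, p.2 + p.1) with hi₁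
  set i₂ : ℤ × ℤ → ℤ × ℤ := fun p => (p.2 - p.1, p.2 + p.1 + 1) with hi₂
  have inj1 : Function.Injective i₁ := by
    rintro ⟨a, b⟩ ⟨c, d⟩ h
    simp only [hi₁, Prod.mk.injEq, Prod.ext_iff] at h ⊢
    omega
  have inj2 : Function.Injective i₂ := by
    rintro ⟨a, b⟩ ⟨c, d⟩ h
    simp only [hi₂, Prod.mk.injEq, Prod.ext_iff] at h ⊢
    omega
  have hr1 : ∀ m n : ℤ, (m, n) ∈ Set.range i₁ ↔ (m + n) % 2 = 0 := by
    intro m n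
    constructor
    · rintro ⟨⟨a, b⟩, h⟩
      simp only [hi₁, Prod.mk.injEq] at h
      omega
    · intro h
      exact ⟨⟨(n - m) / 2, (n + m) / 2⟩, by simp only [hi₁, Prod.mk.injEq]; omega⟩
  have hr2 : ∀ m n : ℤ, (m, n) ∈ Set.range i₂ ↔ (m + n) % 2 = 1 := by
    intro m n
    constructor
    · rintro ⟨⟨a, b⟩, h⟩
      simp only [hi₂, Prod.mk.injEq] at h
      omega
    · intro h
      exact ⟨⟨(n - m - 1) / 2, (n + m - 1) / 2⟩, by simp only [hi₂, Prod.mk.injEq]; omega⟩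
  have hcompl : (Set.range i₁)ᶜ = Set.range i₂ := by
    ext ⟨m, n⟩
    simp only [Set.mem_compl_iff, hr1, hr2]
    omega
  -- pointwise identities
  have key1 : ∀ p : ℤ × ℤ,
      Fterm (2 * τ) x p.1 * Fterm (2 * τ) (2 * z + x) p.2 = f (i₁ p) := by
    rintro ⟨k, l⟩
    simp only [hfdef, hi₁, Fterm, ← Complex.exp_add]
    congr 1
    push_cast
    ring
  have key2 : ∀ p : ℤ × ℤ,
      Gterm (2 * τ) x p.1 * Gterm (2 * τ) (2 * z + x) p.2 = f (i₂ p) := by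
    rintro ⟨k, l⟩
    simp only [hfdef, hi₂, Gterm, Fterm, ← Complex.exp_add]
    congr 1
    push_cast
    ring
  rw [funext key1] at hCD
  rw [funext key2] at hEF
  have hs1 : HasSum (fun q : Set.range i₁ => f q)
      (theta (2 * τ) x * theta (2 * τ) (2 * z + x)) := by
    refine (Equiv.hasSum_iff (Equiv.ofInjective i₁ inj1)).mp ?_
    simpa only [Function.comp_def, Equiv.ofInjective_apply] using hCD
  have hs2 : HasSum (fun q : Set.range i₂ => f q)
      (thetaChar (1 / 2) (2 * τ) x * thetaChar (1 / 2) (2 * τ) (2 * z + x)) := by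
    refine (Equiv.hasSum_iff (Equiv.ofInjective i₂ inj2)).mp ?_
    simpa only [Function.comp_def, Equiv.ofInjective_apply] using hEF
  have hs2' : HasSum (fun q : ↥((Set.range i₁)ᶜ) => f q)
      (thetaChar (1 / 2) (2 * τ) x * thetaChar (1 / 2) (2 * τ) (2 * z + x)) := by
    rw [hcompl]
    exact hs2
  exact hf.unique (hs1.add_compl hs2')
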